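/- Let 0 < a < b, let β ∈ ℝ with β ≠ −1, and let f ∈ C²[a,b]. Then there exists K > 0 such that for every N ∈ ℕ with N ≥ 1, the modified midpoint quadrature error satisfies |E_N| ≤ K/N². -/

import Mathlib

open Filter MeasureTheory Set

/-- The modified midpoint quadrature error `E_N` for `∫_a^b x^β f(x) dx`, where the singular
factor `x^β` is integrated exactly on each subinterval and `f` is evaluated at midpoints:
here `h = (b-a)/N` and `x_t = a + t·h`. -/
noncomputable def midpointError (a b β : ℝ) (f : ℝ → ℝ) (N : ℕ) : ℝ :=
  (∫ x in a..b, x ^ β * f x) -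
    ∑ n ∈ Finset.range N,
      ((a + ((n : ℝ) + 1) * ((b - a) / N)) ^ (β + 1) -
          (a + (n : ℝ) * ((b - a) / N)) ^ (β + 1)) / (β + 1) *
        f (a + ((n : ℝ) + 1 / 2) * ((b - a) / N))

open scoped NNReal

/-!
On a cell `[u, v]` with midpoint `m`, the product midpoint rule errs by `∫ w (f - f m)`.
Subtracting `w m * f' m * (x - m)`, whose integral vanishes by symmetry, leaves
`w (f - f m - f' m (x - m)) + (w - w m) f' m (x - m) = O((x - m)²)` when `w` and `f'` are bounded
and Lipschitz. Each cell of width `h` thus contributes `O(h³)`, and the `N` cells together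
`O(N h³) = O(1 / N²)`. For `w x = x ^ β` the cell integrals of `w` are exactly the weights of
`midpointError`, and on `[a, b] ⊆ (0, ∞)` the needed bounds and Lipschitz constants come from
compactness.
-/

theorem abs_sub_sub_deriv_mul_sub_le {f f' : ℝ → ℝ} {s : Set ℝ} {K : ℝ≥0} (hs : Convex ℝ s)
    (hf : ∀ x ∈ s, HasDerivWithinAt f (f' x) s x) (hf' : LipschitzOnWith K f' s)
    {x y : ℝ} (hx : x ∈ s) (hy : y ∈ s) :
    |f y - f x - f' x * (y - x)| ≤ K * (y - x) ^ 2 := by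
  set t := s ∩ uIcc x y
  have hg : ∀ z ∈ t, HasDerivWithinAt (fun z ↦ f z - f' x * z) (f' z - f' x) t z := fun z hz ↦
    ((hf z hz.1).mono inter_subset_left).sub
      ((hasDerivWithinAt_id z t).const_mul (f' x)) |>.congr_deriv (by simp)
  have hbound : ∀ z ∈ t, ‖f' z - f' x‖ ≤ K * |y - x| := fun z hz ↦
    calc ‖f' z - f' x‖ = dist (f' z) (f' x) := rfl
      _ ≤ K * dist z x := hf'.dist_le_mul z hz.1 x hx
      _ ≤ K * |y - x| := by gcongr; exact abs_sub_left_of_mem_uIcc hz.2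
  have := (hs.inter (convex_uIcc x y)).norm_image_sub_le_of_norm_hasDerivWithin_le hg hbound
    ⟨hx, left_mem_uIcc⟩ ⟨hy, right_mem_uIcc⟩
  rw [Real.norm_eq_abs, Real.norm_eq_abs] at this
  calc |f y - f x - f' x * (y - x)| = |f y - f' x * y - (f x - f' x * x)| := by ring_nf
    _ ≤ K * |y - x| * |y - x| := this
    _ = K * (y - x) ^ 2 := by rw [mul_assoc, abs_mul_abs_self, sq]

theorem integral_sub_midpoint_eq_zero (u v : ℝ) : ∫ x in u..v, (x - (u + v) / 2) = 0 := by
  rw [intervalIntegral.integral_comp_sub_right (fun x ↦ x), integral_id]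
  ring

theorem abs_integral_mul_sub_integral_mul_midpoint_le {w f f' : ℝ → ℝ} {u v C₀ : ℝ}
    {Lw Lf : ℝ≥0} (huv : u ≤ v) (hw : LipschitzOnWith Lw w (Icc u v))
    (hwC : ∀ x ∈ Icc u v, |w x| ≤ C₀)
    (hf : ∀ x ∈ Icc u v, HasDerivWithinAt f (f' x) (Icc u v) x)
    (hf' : LipschitzOnWith Lf f' (Icc u v)) :
    |(∫ x in u..v, w x * f x) - (∫ x in u..v, w x) * f ((u + v) / 2)|
      ≤ (C₀ * Lf + Lw * |f' ((u + v) / 2)|) * (v - u) ^ 3 / 4 := by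
  set m := (u + v) / 2 with hm_def
  have hm : m ∈ Icc u v := ⟨by linarith [hm_def], by linarith [hm_def]⟩
  have hC₀ : 0 ≤ C₀ := (abs_nonneg _).trans (hwC m hm)
  set g : ℝ → ℝ := fun x ↦ w x * (f x - f m - f' m * (x - m)) + (w x - w m) * f' m * (x - m)
  have hwc : ContinuousOn w (Icc u v) := hw.continuousOn
  have hfc : ContinuousOn f (Icc u v) := fun x hx ↦ (hf x hx).continuousWithinAt
  have hgc : ContinuousOn g (Icc u v) := by fun_prop
  have hsplit : (∫ x in u..v, w x * f x) - (∫ x in u..v, w x) * f m = ∫ x in u..v, g x := by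
    have hwf : ∀ x, w x * f x = (g x + w m * f' m * (x - m)) + w x * f m := fun x ↦ by
      simp only [g]; ring
    have hgi : IntervalIntegrable g volume u v := hgc.intervalIntegrable_of_Icc huv
    have hli : IntervalIntegrable (fun x ↦ w m * f' m * (x - m)) volume u v :=
      (continuous_const.mul (continuous_id.sub continuous_const)).intervalIntegrable u v
    have hwi : IntervalIntegrable (fun x ↦ w x * f m) volume u v :=
      (hwc.intervalIntegrable_of_Icc huv).mul_const _
    simp_rw [hwf]
    rw [intervalIntegral.integral_add (hgi.add hli) hwi, intervalIntegral.integral_add hgi hli,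
      intervalIntegral.integral_const_mul, integral_sub_midpoint_eq_zero,
      intervalIntegral.integral_mul_const]
    ring
  have hg : ∀ x ∈ uIoc u v, ‖g x‖ ≤ (C₀ * Lf + Lw * |f' m|) * ((v - u) / 2) ^ 2 := by
    intro x hx
    have hx : x ∈ Icc u v := Ioc_subset_Icc_self (uIoc_of_le huv ▸ hx)
    have hxm : |x - m| ≤ (v - u) / 2 :=
      abs_le.2 ⟨by linarith [hm_def, hx.1], by linarith [hm_def, hx.2]⟩
    have htaylor := abs_sub_sub_deriv_mul_sub_le (convex_Icc u v) hf hf' hm hx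
    have hwlip : |w x - w m| ≤ Lw * |x - m| := hw.dist_le_mul x hx m hm
    calc ‖g x‖ ≤ |w x| * |f x - f m - f' m * (x - m)| + |w x - w m| * |f' m| * |x - m| := by
          simp only [g, Real.norm_eq_abs, ← abs_mul]; exact abs_add_le _ _
      _ ≤ C₀ * (Lf * (x - m) ^ 2) + Lw * |x - m| * |f' m| * |x - m| := by
          gcongr
          exact hwC x hx
      _ = (C₀ * Lf + Lw * |f' m|) * |x - m| ^ 2 := by rw [← sq_abs]; ring
      _ ≤ (C₀ * Lf + Lw * |f' m|) * ((v - u) / 2) ^ 2 := by gcongr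
  calc |(∫ x in u..v, w x * f x) - (∫ x in u..v, w x) * f m|
      = ‖∫ x in u..v, g x‖ := by rw [hsplit, Real.norm_eq_abs]
    _ ≤ (C₀ * Lf + Lw * |f' m|) * ((v - u) / 2) ^ 2 * |v - u| :=
        intervalIntegral.norm_integral_le_of_norm_le_const hg
    _ = (C₀ * Lf + Lw * |f' m|) * (v - u) ^ 3 / 4 := by
        rw [abs_of_nonneg (sub_nonneg.2 huv)]; ring

theorem abs_integral_mul_sub_sum_midpoint_le {w f f' : ℝ → ℝ} {a b h C₀ M₁ : ℝ} {Lw Lf : ℝ≥0}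
    {N : ℕ} (hh : 0 < h) (hNh : N * h = b - a) (hw : LipschitzOnWith Lw w (Icc a b))
    (hwC : ∀ x ∈ Icc a b, |w x| ≤ C₀)
    (hf : ∀ x ∈ Icc a b, HasDerivWithinAt f (f' x) (Icc a b) x)
    (hf' : LipschitzOnWith Lf f' (Icc a b)) (hf'M : ∀ x ∈ Icc a b, |f' x| ≤ M₁) :
    |(∫ x in a..b, w x * f x) - ∑ n ∈ Finset.range N,
        (∫ x in (a + n * h)..(a + (n + 1) * h), w x) * f (a + (n + 1 / 2) * h)|
      ≤ (C₀ * Lf + Lw * M₁) * (b - a) * h ^ 2 / 4 := by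
  have hcell : ∀ n < N, Icc (a + n * h) (a + (n + 1) * h) ⊆ Icc a b := fun n hn ↦ by
    have : ((n + 1 : ℕ) : ℝ) ≤ N := by exact_mod_cast hn
    push_cast at this
    exact Icc_subset_Icc (by nlinarith [n.cast_nonneg (α := ℝ)]) (by nlinarith)
  have hsum : ∫ x in a..b, w x * f x =
      ∑ n ∈ Finset.range N, ∫ x in (a + n * h)..(a + (n + 1) * h), w x * f x := by
    have hwfc : ContinuousOn (fun x ↦ w x * f x) (Icc a b) :=
      hw.continuousOn.mul fun x hx ↦ (hf x hx).continuousWithinAt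
    have := intervalIntegral.sum_integral_adjacent_intervals (a := fun k : ℕ ↦ a + k * h)
      (f := fun x ↦ w x * f x) (μ := volume) (n := N) fun k hk ↦ by
        push_cast
        exact (hwfc.mono (hcell k hk)).intervalIntegrable_of_Icc (by nlinarith)
    simp only [Nat.cast_zero, zero_mul, add_zero, Nat.cast_add, Nat.cast_one] at this
    rw [hNh, add_sub_cancel] at this
    exact this.symm
  have hterm : ∀ n ∈ Finset.range N,
      |(∫ x in (a + n * h)..(a + (n + 1) * h), w x * f x) -
          (∫ x in (a + n * h)..(a + (n + 1) * h), w x) * f (a + (n + 1 / 2) * h)|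
        ≤ (C₀ * Lf + Lw * M₁) * h ^ 3 / 4 := fun n hn ↦ by
    have hs := hcell n (Finset.mem_range.1 hn)
    have hmid : (a + n * h + (a + (n + 1) * h)) / 2 = a + (n + 1 / 2) * h := by ring
    have := abs_integral_mul_sub_integral_mul_midpoint_le (by nlinarith) (hw.mono hs)
      (fun x hx ↦ hwC x (hs hx)) (fun x hx ↦ (hf x (hs hx)).mono hs) (hf'.mono hs)
    rw [hmid, show a + (n + 1) * h - (a + n * h) = h by ring] at this
    refine this.trans ?_
    have hmid_mem : a + (n + 1 / 2) * h ∈ Icc (a + n * h) (a + (n + 1) * h) :=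
      ⟨by nlinarith, by nlinarith⟩
    gcongr
    exact hf'M _ (hs hmid_mem)
  calc _ = |∑ n ∈ Finset.range N, ((∫ x in (a + n * h)..(a + (n + 1) * h), w x * f x) -
          (∫ x in (a + n * h)..(a + (n + 1) * h), w x) * f (a + (n + 1 / 2) * h))| := by
        rw [hsum, Finset.sum_sub_distrib]
    _ ≤ ∑ n ∈ Finset.range N, (C₀ * Lf + Lw * M₁) * h ^ 3 / 4 :=
        (Finset.abs_sum_le_sum_abs _ _).trans (Finset.sum_le_sum hterm)
    _ = (C₀ * Lf + Lw * M₁) * (b - a) * h ^ 2 / 4 := by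
        rw [Finset.sum_const, Finset.card_range, nsmul_eq_mul, ← hNh]; ring

theorem midpointError_eq {a b β : ℝ} (ha : 0 < a) (hab : a ≤ b) (hβ : β ≠ -1) (f : ℝ → ℝ)
    (N : ℕ) :
    midpointError a b β f N = (∫ x in a..b, x ^ β * f x) - ∑ n ∈ Finset.range N,
      (∫ x in (a + n * ((b - a) / N))..(a + (n + 1) * ((b - a) / N)), x ^ β) *
        f (a + (n + 1 / 2) * ((b - a) / N)) := by
  have hh : 0 ≤ (b - a) / N := div_nonneg (sub_nonneg.2 hab) N.cast_nonneg
  refine congrArg _ (Finset.sum_congr rfl fun n _ ↦ ?_)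
  have hpos : ∀ t : ℝ, 0 ≤ t → 0 < a + t * ((b - a) / N) := fun t ht ↦ by positivity
  have h0 : (0 : ℝ) ∉ uIcc (a + n * ((b - a) / N)) (a + (n + 1) * ((b - a) / N)) :=
    notMem_uIcc_of_lt (hpos _ n.cast_nonneg) (hpos _ (by positivity))
  rw [integral_rpow (.inr ⟨hβ, h0⟩)]

theorem stmt3 (a b β : ℝ) (ha : 0 < a) (hab : a < b) (hβ : β ≠ -1)
    (f : ℝ → ℝ) (hf : ContDiffOn ℝ 2 f (Set.Icc a b)) :
    ∃ K : ℝ, 0 < K ∧ ∀ N : ℕ, 1 ≤ N →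
      |midpointError a b β f N| ≤ K / (N : ℝ) ^ 2 := by
  have hw : ContDiffOn ℝ 1 (fun x : ℝ ↦ x ^ β) (Icc a b) := fun x hx ↦
    (Real.contDiffAt_rpow_const_of_ne (by linarith [hx.1])).contDiffWithinAt
  have hf' : ContDiffOn ℝ 1 (derivWithin f (Icc a b)) (Icc a b) :=
    hf.derivWithin (uniqueDiffOn_Icc hab) (by norm_num)
  have hderiv : ∀ x ∈ Icc a b, HasDerivWithinAt f (derivWithin f (Icc a b) x) (Icc a b) x :=
    fun x hx ↦ (hf.differentiableOn (by norm_num) x hx).hasDerivWithinAt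
  obtain ⟨Lw, hLw⟩ := hw.exists_lipschitzOnWith one_ne_zero (convex_Icc a b) isCompact_Icc
  obtain ⟨Lf, hLf⟩ := hf'.exists_lipschitzOnWith one_ne_zero (convex_Icc a b) isCompact_Icc
  obtain ⟨C₀, hC₀⟩ := isCompact_Icc.exists_bound_of_continuousOn hw.continuousOn
  obtain ⟨M₁, hM₁⟩ := isCompact_Icc.exists_bound_of_continuousOn hf'.continuousOn
  have ha_mem : a ∈ Icc a b := left_mem_Icc.2 hab.le
  have hC : 0 ≤ C₀ * Lf + Lw * M₁ := by
    have hC₀_nonneg := (norm_nonneg _).trans (hC₀ a ha_mem)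
    have hM₁_nonneg := (norm_nonneg _).trans (hM₁ a ha_mem)
    positivity
  refine ⟨(C₀ * Lf + Lw * M₁) * (b - a) ^ 3 / 4 + 1, by positivity, fun N hN ↦ ?_⟩
  have hN : (0 : ℝ) < N := by exact_mod_cast hN
  rw [midpointError_eq ha hab.le hβ]
  calc _ ≤ (C₀ * Lf + Lw * M₁) * (b - a) * ((b - a) / N) ^ 2 / 4 :=
        abs_integral_mul_sub_sum_midpoint_le (div_pos (sub_pos.2 hab) hN) (by field_simp)
          hLw hC₀ hderiv hLf hM₁
    _ = (C₀ * Lf + Lw * M₁) * (b - a) ^ 3 / 4 / N ^ 2 := by field_simp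
    _ ≤ _ := by gcongr; linarith
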